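/- arXiv:2008.06122 — 2 statements merged into one kernel-verified Lean document; each statement's English description precedes it below -/
import Mathlib

section
/- For every real y with 1 < y ≤ 7/2, we have y + (1 - y) * ln(y) > 0. -/
/-! Substituting `y = t²`, the bound `u < sinh u` at `u = log t` gives `log y < t - t⁻¹`.
Hence `(y - 1) log y < (t² - 1)(t - t⁻¹) = (t² - 1)² / t`, and this is at most `t² = y` because the
quartic `t⁴ - t³ - 2t² + 1` is nonpositive for `1 ≤ t ≤ √(7/2)`. -/

open Real

lemma Real.log_lt_sub_inv_div_two {t : ℝ} (ht : 1 < t) : log t < (t - t⁻¹) / 2 := by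
  rw [← sinh_log (by linarith)]
  exact self_lt_sinh_iff.mpr (log_pos ht)

lemma Real.log_lt_sqrt_sub_inv_sqrt {y : ℝ} (hy : 1 < y) : log y < √y - (√y)⁻¹ := by
  have hsqrt : 1 < √y := (lt_sqrt zero_le_one).mpr (by linarith)
  have h := log_lt_sub_inv_div_two hsqrt
  rw [log_sqrt (by linarith)] at h
  linarith

lemma sq_sub_one_mul_sub_inv_le_sq {t : ℝ} (h1 : 1 ≤ t) (h2 : t ^ 2 ≤ 7 / 2) :
    (t ^ 2 - 1) * (t - t⁻¹) ≤ t ^ 2 := by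
  have ht : 0 < t := by linarith
  have hquartic : (t ^ 2 - 1) ^ 2 ≤ t ^ 3 := by
    nlinarith [sq_nonneg (t - 1), sq_nonneg (t ^ 2 - 7 / 2)]
  rw [show (t ^ 2 - 1) * (t - t⁻¹) = (t ^ 2 - 1) ^ 2 / t by field_simp, div_le_iff₀ ht]
  linarith

theorem stmt2 (y : ℝ) (h1 : 1 < y) (h2 : y ≤ 7/2) : y + (1 - y) * Real.log y > 0 := by
  have hlog : (y - 1) * log y < (y - 1) * (√y - (√y)⁻¹) :=
    mul_lt_mul_of_pos_left (log_lt_sqrt_sub_inv_sqrt h1) (by linarith)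
  have hbound : (y - 1) * (√y - (√y)⁻¹) ≤ y := by
    have hsq : √y ^ 2 = y := sq_sqrt (by linarith)
    simpa only [hsq] using sq_sub_one_mul_sub_inv_le_sq (one_le_sqrt.mpr h1.le) (hsq.trans_le h2)
  linarith
end

section
/- For every real z in the closed interval [0, ln(2)], we have -z ≤ ln(1 - z/(2*ln(2))). -/
/-! On `[-log 2, 0]` the convex function `exp` lies below its chord, which is
`1 - z / (2 log 2)` at `-z`; taking logarithms gives the claim. -/

open Real

lemma Real.exp_mul_le_one_sub_add_mul_exp (c : ℝ) {t : ℝ} (ht0 : 0 ≤ t) (ht1 : t ≤ 1) :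
    exp (t * c) ≤ 1 - t + t * exp c := by
  have hchord := convexOn_exp.2 (Set.mem_univ c) (Set.mem_univ 0) ht0 (sub_nonneg.2 ht1)
    (add_sub_cancel t 1)
  simp only [smul_eq_mul, mul_zero, add_zero, exp_zero, mul_one] at hchord
  linarith

lemma Real.exp_neg_le_one_sub_div_two_log_two {z : ℝ} (h0 : 0 ≤ z) (h1 : z ≤ log 2) :
    exp (-z) ≤ 1 - z / (2 * log 2) := by
  have hlog : 0 < log 2 := log_pos one_lt_two
  have hchord := exp_mul_le_one_sub_add_mul_exp (-log 2) (div_nonneg h0 hlog.le)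
    ((div_le_one hlog).2 h1)
  rw [exp_neg, exp_log two_pos, mul_neg, div_mul_cancel₀ z hlog.ne'] at hchord
  calc exp (-z) ≤ 1 - z / log 2 + z / log 2 * 2⁻¹ := hchord
    _ = 1 - z / (2 * log 2) := by ring

theorem stmt8 (z : ℝ) (h0 : 0 ≤ z) (h1 : z ≤ Real.log 2) :
    -z ≤ Real.log (1 - z / (2 * Real.log 2)) := by
  have hexp := exp_neg_le_one_sub_div_two_log_two h0 h1
  exact (le_log_iff_exp_le ((exp_pos _).trans_le hexp)).2 hexp
end
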